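/- arXiv:2010.04594 — 2 statements merged into one kernel-verified Lean document; each statement's English description precedes it below -/
import Mathlib

section
/- Let (S(t)f)(x) := sup_{|y|≤t} f(x+y) on BUC(ℝ). A function f ∈ BUC(ℝ) belongs to the Lipschitz set D_L := {f : sup_{0<h≤h₀} ‖(S(h)f − f)/h‖_∞ < ∞ for some h₀ > 0} if and only if f is (globally) Lipschitz continuous. In particular D_L = D_L^s = Lip_b, the space of bounded Lipschitz functions. -/
/-!
Testing the supremum at `y = 0` gives `f ≤ S(h) f`, and a `K`-Lipschitz `f` satisfies
`S(h) f ≤ f + K h`. Conversely, testing it at the shift `y - x` with `h = |x - y|` gives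
`f y - f x ≤ S(h) f x - f x ≤ K |x - y|` for points closer than `h₀`, while for points farther
apart boundedness gives `|f x - f y| ≤ 2C ≤ (2C / h₀) |x - y|`. Lipschitz continuity is invariant
under `f ↦ -f`, hence `D_L = D_L^s`.
-/

/-- The uncertain shift semigroup on `BUC(ℝ)`: `(S t f) x = sup_{|y| ≤ t} f (x + y)`. -/
noncomputable def US (t : ℝ) (f : ℝ → ℝ) (x : ℝ) : ℝ :=
  sSup {z : ℝ | ∃ y : ℝ, |y| ≤ t ∧ z = f (x + y)}

/-- `f` belongs to the Lipschitz set `D_L` of the uncertain shift semigroup. -/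
def memDL (f : ℝ → ℝ) : Prop :=
  ∃ h₀ > (0 : ℝ), ∃ K : ℝ, ∀ h : ℝ, 0 < h → h ≤ h₀ → ∀ x, |US h f x - f x| ≤ K * h

section UncertainShift

variable {f : ℝ → ℝ} {t M x : ℝ}

lemma le_US (hM : ∀ y, |y| ≤ t → f (x + y) ≤ M) {y : ℝ} (hy : |y| ≤ t) :
    f (x + y) ≤ US t f x :=
  le_csSup ⟨M, by rintro _ ⟨y, hy, rfl⟩; exact hM y hy⟩ ⟨y, hy, rfl⟩

lemma US_le (ht : 0 ≤ t) (hM : ∀ y, |y| ≤ t → f (x + y) ≤ M) : US t f x ≤ M :=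
  csSup_le ⟨f (x + 0), 0, by simpa using ht, rfl⟩ (by rintro _ ⟨y, hy, rfl⟩; exact hM y hy)

lemma memDL_of_lipschitz {K : ℝ} (hK : ∀ x y, |f x - f y| ≤ K * |x - y|) : memDL f := by
  have hK0 : 0 ≤ K := by simpa using (abs_nonneg _).trans (hK 1 0)
  refine ⟨1, one_pos, K, fun h hh _ x => ?_⟩
  have hM : ∀ y, |y| ≤ h → f (x + y) ≤ f x + K * h := fun y hy => by
    have hxy := (abs_le.1 (hK (x + y) x)).2
    rw [add_sub_cancel_left] at hxy
    nlinarith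
  have hlo : f x ≤ US h f x := by simpa using le_US hM (y := 0) (by simpa using hh.le)
  have hhi := US_le hh.le hM
  rw [abs_le]
  constructor <;> nlinarith

lemma memDL.lipschitz_of_abs_le {C : ℝ} (hb : ∀ x, |f x| ≤ C) (hf : memDL f) :
    ∃ K, ∀ x y, |f x - f y| ≤ K * |x - y| := by
  obtain ⟨h₀, hh₀, K, hK⟩ := hf
  have hC : 0 ≤ C := (abs_nonneg _).trans (hb 0)
  have hnear : ∀ x y, |x - y| ≤ h₀ → f y - f x ≤ K * |x - y| := by
    intro x y hxy
    rcases eq_or_ne x y with rfl | hne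
    · simp
    have hsup : f y ≤ US |x - y| f x := by
      simpa using le_US (x := x) (M := C) (fun _ _ => (abs_le.1 (hb _)).2) (y := y - x)
        (abs_sub_comm y x).le
    have hDL := (abs_le.1 (hK _ (abs_pos.2 (sub_ne_zero.2 hne)) hxy x)).2
    linarith
  refine ⟨max K (2 * C / h₀), fun x y => ?_⟩
  rcases le_or_gt |x - y| h₀ with hxy | hxy
  · calc |f x - f y| ≤ K * |x - y| := by
          refine abs_sub_le_iff.2 ⟨?_, hnear x y hxy⟩
          simpa [abs_sub_comm] using hnear y x (by rwa [abs_sub_comm])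
      _ ≤ max K (2 * C / h₀) * |x - y| := by gcongr; exact le_max_left _ _
  · calc |f x - f y| ≤ 2 * C := by
          have := abs_le.1 (hb x)
          have := abs_le.1 (hb y)
          rw [abs_le]; constructor <;> linarith
      _ = 2 * C / h₀ * h₀ := by field_simp
      _ ≤ 2 * C / h₀ * |x - y| := by gcongr
      _ ≤ max K (2 * C / h₀) * |x - y| := by gcongr; exact le_max_right _ _

end UncertainShift

theorem stmt8_general (f : ℝ → ℝ) (C : ℝ) (hb : ∀ x, |f x| ≤ C) :
    (memDL f ↔ ∃ K : ℝ, ∀ x y : ℝ, |f x - f y| ≤ K * |x - y|) ∧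
    (memDL f ↔ memDL f ∧ memDL (-f)) := by
  have hlip : memDL f ↔ ∃ K : ℝ, ∀ x y : ℝ, |f x - f y| ≤ K * |x - y| :=
    ⟨memDL.lipschitz_of_abs_le hb, fun ⟨_, hK⟩ => memDL_of_lipschitz hK⟩
  refine ⟨hlip, fun hf => ⟨hf, ?_⟩, And.left⟩
  obtain ⟨K, hK⟩ := hlip.1 hf
  exact memDL_of_lipschitz (K := K) fun x y => by
    simpa only [Pi.neg_apply, neg_sub_neg, abs_sub_comm] using hK x y

/-- For the uncertain shift semigroup, a bounded uniformly continuous `f` belongs to the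
Lipschitz set `D_L` iff it is Lipschitz; moreover `D_L = D_L^s`, i.e. `f ∈ D_L` iff
both `f ∈ D_L` and `-f ∈ D_L`. -/
theorem stmt8 (f : ℝ → ℝ) (C : ℝ) (hb : ∀ x, |f x| ≤ C) (hu : UniformContinuous f) :
    (memDL f ↔ ∃ K : ℝ, ∀ x y : ℝ, |f x - f y| ≤ K * |x - y|) ∧
    (memDL f ↔ memDL f ∧ memDL (-f)) :=
  stmt8_general f C hb
end

section
/- Let G be a metric space with the intermediate-point property (for x,y ∈ G and λ ∈ (0,1) there is m with d(x,m)=λd(x,y), d(m,y)=(1−λ)d(x,y)). If f : G → ℝ is bounded uniformly continuous with modulus ω (|f(x)−f(y)| ≤ ε whenever d(x,y) ≤ δ(ε)), then for each t ≥ 0 the function S(t)f defined by (S(t)f)(x) := sup_{d(x,y)≤t} f(y) is uniformly continuous with the same modulus: |S(t)f(x) − S(t)f(y)| ≤ ε whenever d(x,y) ≤ δ(ε). Moreover ‖S(t)f − f‖_∞ ≤ sup_{d(x,y)≤t}|f(x)−f(y)|, so S(t)f → f uniformly as t ↓ 0. -/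
/-!
Writing `δ = dist x y`, every `w` within `t` of `x` is within `t + δ` of `y`, and the
intermediate point of `y` and `w` with ratio `t / (t + δ)` lies within `t` of `y` and within `δ`
of `w`. Hence `f w ≤ f m + ε ≤ S(t)f y + ε`, which is the modulus estimate for `S(t)f`. The
uniform approximation follows from `f x ≤ S(t)f x ≤ f x + sup_{dist a b ≤ t} |f a - f b|`.
-/

/-- The uncertain shift semigroup on a metric space `G`:
`(S t f) x = sup_{dist x y ≤ t} f y`. -/
noncomputable def MS {G : Type*} [MetricSpace G] (t : ℝ) (f : G → ℝ) (x : G) : ℝ :=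
  sSup {z : ℝ | ∃ y : G, dist x y ≤ t ∧ z = f y}

open Set

def HasIntermediatePoints (G : Type*) [MetricSpace G] : Prop :=
  ∀ x y : G, ∀ l : ℝ, 0 < l → l < 1 → ∃ m : G,
    dist x m = l * dist x y ∧ dist m y = (1 - l) * dist x y

section

variable {G : Type*} [MetricSpace G]

theorem HasIntermediatePoints.exists_dist_le_dist_le (hG : HasIntermediatePoints G)
    {y w : G} {s t : ℝ} (hs : 0 ≤ s) (ht : 0 ≤ t) (h : dist y w ≤ s + t) :
    ∃ m, dist y m ≤ s ∧ dist m w ≤ t := by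
  rcases hs.eq_or_lt with rfl | hs
  · exact ⟨y, by simp, by simpa using h⟩
  rcases ht.eq_or_lt with rfl | ht
  · exact ⟨w, by simpa using h, by simp⟩
  have hst : 0 < s + t := by positivity
  obtain ⟨m, hym, hmw⟩ := hG y w (s / (s + t)) (by positivity) ((div_lt_one hst).2 (by linarith))
  refine ⟨m, ?_, ?_⟩
  · calc dist y m = s / (s + t) * dist y w := hym
      _ ≤ s / (s + t) * (s + t) := by gcongr
      _ = s := by field_simp
  · have hcompl : 1 - s / (s + t) = t / (s + t) := by field_simp; ring
    calc dist m w = t / (s + t) * dist y w := by rw [hmw, hcompl]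
      _ ≤ t / (s + t) * (s + t) := by gcongr
      _ = t := by field_simp

variable {f : G → ℝ} {t : ℝ} {x y : G}

theorem le_MS (hf : BddAbove (range f)) (h : dist x y ≤ t) : f y ≤ MS t f x :=
  le_csSup (hf.mono (by rintro _ ⟨z, -, rfl⟩; exact mem_range_self z)) ⟨y, h, rfl⟩

theorem self_le_MS (hf : BddAbove (range f)) (ht : 0 ≤ t) : f x ≤ MS t f x :=
  le_MS hf (by simpa using ht)

theorem MS_le {c : ℝ} (ht : 0 ≤ t) (h : ∀ y, dist x y ≤ t → f y ≤ c) : MS t f x ≤ c :=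
  csSup_le ⟨f x, x, by simpa using ht, rfl⟩ (by rintro _ ⟨y, hy, rfl⟩; exact h y hy)

theorem MS_le_MS_add (hG : HasIntermediatePoints G) (hf : BddAbove (range f)) {ε δ : ℝ}
    (hmod : ∀ a b : G, dist a b ≤ δ → |f a - f b| ≤ ε) (ht : 0 ≤ t) (hxy : dist x y ≤ δ) :
    MS t f x ≤ MS t f y + ε := by
  refine MS_le ht fun w hxw ↦ ?_
  have hyw : dist y w ≤ t + δ := by
    linarith [dist_triangle y x w, dist_comm x y]
  obtain ⟨m, hym, hmw⟩ :=
    hG.exists_dist_le_dist_le ht (dist_nonneg.trans hxy) hyw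
  linarith [(abs_le.1 (hmod m w hmw)).1, le_MS hf hym]

theorem abs_MS_sub_le (hG : HasIntermediatePoints G) (hf : BddAbove (range f)) {ε δ : ℝ}
    (hmod : ∀ a b : G, dist a b ≤ δ → |f a - f b| ≤ ε) (ht : 0 ≤ t) (hxy : dist x y ≤ δ) :
    |MS t f x - MS t f y| ≤ ε :=
  abs_sub_le_iff.2
    ⟨by linarith [MS_le_MS_add hG hf hmod ht hxy],
     by linarith [MS_le_MS_add hG hf hmod ht (dist_comm x y ▸ hxy)]⟩

theorem abs_MS_sub_self_le (hf : BddAbove (range f)) {c : ℝ} (ht : 0 ≤ t)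
    (hosc : ∀ a b : G, dist a b ≤ t → |f a - f b| ≤ c) : |MS t f x - f x| ≤ c := by
  have hc : 0 ≤ c := by simpa using hosc x x (by simpa using ht)
  have hupper : MS t f x ≤ f x + c :=
    MS_le ht fun y hy ↦ by linarith [(abs_le.1 (hosc y x (by rwa [dist_comm]))).2]
  rw [abs_le]
  constructor <;> linarith [self_le_MS (x := x) hf ht]

end

/-- On a metric space with the intermediate-point property, `S(t)f` has the same modulus of
continuity as a bounded uniformly continuous `f`; moreover
`‖S(t)f - f‖_∞ ≤ sup_{dist a b ≤ t} |f a - f b|`, so `S(t)f → f` uniformly as `t ↓ 0`. -/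
theorem stmt19 {G : Type*} [MetricSpace G]
    (hgeo : ∀ x y : G, ∀ l : ℝ, 0 < l → l < 1 → ∃ m : G,
      dist x m = l * dist x y ∧ dist m y = (1 - l) * dist x y)
    (f : G → ℝ) (C : ℝ) (hb : ∀ x, |f x| ≤ C) (hu : UniformContinuous f) :
    (∀ ε δ : ℝ, 0 < ε → (∀ a b : G, dist a b ≤ δ → |f a - f b| ≤ ε) →
      ∀ t : ℝ, 0 ≤ t → ∀ x y : G, dist x y ≤ δ → |MS t f x - MS t f y| ≤ ε) ∧
    (∀ t : ℝ, 0 ≤ t → ∀ x : G,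
      |MS t f x - f x| ≤ sSup {r : ℝ | ∃ a b : G, dist a b ≤ t ∧ r = |f a - f b|}) ∧
    (∀ ε : ℝ, 0 < ε → ∃ δ > (0 : ℝ), ∀ t : ℝ, 0 ≤ t → t ≤ δ → ∀ x : G,
      |MS t f x - f x| ≤ ε) := by
  have hf : BddAbove (range f) := ⟨C, by rintro _ ⟨x, rfl⟩; exact (abs_le.1 (hb x)).2⟩
  refine ⟨fun ε δ _ hmod t ht x y hxy ↦ abs_MS_sub_le hgeo hf hmod ht hxy, fun t ht x ↦ ?_, ?_⟩
  · have hosc_bdd : BddAbove {r : ℝ | ∃ a b : G, dist a b ≤ t ∧ r = |f a - f b|} := by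
      refine ⟨C + C, ?_⟩
      rintro _ ⟨a, b, -, rfl⟩
      exact (abs_sub _ _).trans (add_le_add (hb a) (hb b))
    exact abs_MS_sub_self_le hf ht fun a b hab ↦ le_csSup hosc_bdd ⟨a, b, hab, rfl⟩
  · intro ε hε
    obtain ⟨δ, hδ, hδf⟩ := Metric.uniformContinuous_iff.1 hu ε hε
    refine ⟨δ / 2, by positivity, fun t ht htδ x ↦ abs_MS_sub_self_le hf ht fun a b hab ↦ ?_⟩
    exact (hδf (by linarith : dist a b < δ)).le
end
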